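/- arXiv:2603.06628 — 7 statements merged into one kernel-verified Lean document; each statement's English description precedes it below -/
import Mathlib

section
/- All eigenvalues of the Jacobian J at W1, namely −1, −τ, and −(ζ+θ+ζΩ)/(1+Ω), are negative real numbers, so the spatially homogeneous equilibrium W1 is locally asymptotically stable. -/
/-! The Jacobian at `W1` is lower triangular, so its characteristic polynomial is the product of
`λ` minus its diagonal entries `-1`, `-τ`, `-(ζ + θ + ζΩ)/(1 + Ω)`, each negative for positive
parameters. -/

namespace Matrix

theorem IsLowerTriangular.det_sub_smul_one_eq_zero_iff {m R : Type*} [Fintype m] [DecidableEq m]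
    [LinearOrder m] [CommRing R] [IsDomain R] {M : Matrix m m R} (hM : M.IsLowerTriangular)
    (lam : R) : (M - lam • 1).det = 0 ↔ ∃ i, M i i = lam := by
  have hlower : (M - lam • 1).IsLowerTriangular := by
    rw [smul_one_eq_diagonal]
    exact hM.sub (blockTriangular_diagonal _)
  simp [det_of_isLowerTriangular _ hlower, Finset.prod_eq_zero_iff, sub_eq_zero]

theorem isLowerTriangular_fin_three {R : Type*} [Zero R] (a b c d e f : R) :
    !![a, 0, 0; b, c, 0; d, e, f].IsLowerTriangular := by
  intro i j hij
  fin_cases i <;> fin_cases j <;> first | rfl | exact absurd hij (by decide)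

theorem det_sub_smul_one_fin_three_eq_zero_iff {R : Type*} [CommRing R] [IsDomain R]
    (a b c d e f lam : R) :
    (!![a, 0, 0; b, c, 0; d, e, f] - lam • 1).det = 0 ↔ lam = a ∨ lam = c ∨ lam = f := by
  rw [(isLowerTriangular_fin_three a b c d e f).det_sub_smul_one_eq_zero_iff]
  simp [Fin.exists_fin_succ, eq_comm]

end Matrix

theorem eigenvalues_negative_general (β τ θ Ω ζ : ℝ)
    (hτ : 0 < τ) (hθ : 0 < θ) (hΩ : 0 < Ω) (hζ : 0 < ζ) :
    let J : Matrix (Fin 3) (Fin 3) ℝ :=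
      !![-1, 0, 0;
         β, -τ, 0;
         ζ * θ * (1 + 2 * Ω) / ((1 + Ω) * (ζ + θ + ζ * Ω)), 0,
           -((ζ + θ + ζ * Ω) / (1 + Ω))]
    ((-1 : ℝ) < 0 ∧ -τ < 0 ∧ -((ζ + θ + ζ * Ω) / (1 + Ω)) < 0) ∧
    (∀ lam : ℝ,
      (J - lam • (1 : Matrix (Fin 3) (Fin 3) ℝ)).det = 0 ↔
        (lam = -1 ∨ lam = -τ ∨ lam = -((ζ + θ + ζ * Ω) / (1 + Ω)))) ∧
    (∀ lam : ℝ,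
      (J - lam • (1 : Matrix (Fin 3) (Fin 3) ℝ)).det = 0 → lam < 0) := by
  intro J
  have hneg : (-1 : ℝ) < 0 ∧ -τ < 0 ∧ -((ζ + θ + ζ * Ω) / (1 + Ω)) < 0 :=
    ⟨by norm_num, neg_neg_of_pos hτ, neg_neg_of_pos (by positivity)⟩
  have hspec := Matrix.det_sub_smul_one_fin_three_eq_zero_iff (-1 : ℝ) β (-τ)
    (ζ * θ * (1 + 2 * Ω) / ((1 + Ω) * (ζ + θ + ζ * Ω))) 0 (-((ζ + θ + ζ * Ω) / (1 + Ω)))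
  refine ⟨hneg, hspec, fun lam hlam => ?_⟩
  rcases (hspec lam).mp hlam with rfl | rfl | rfl
  exacts [hneg.1, hneg.2.1, hneg.2.2]

/-- All eigenvalues of the Jacobian `J` at `W1`, namely `−1`, `−τ` and
`−(ζ+θ+ζΩ)/(1+Ω)`, are negative real numbers; hence every root of the
characteristic polynomial is negative, so `W1` is locally asymptotically
stable. -/
theorem eigenvalues_negative (β τ θ Ω ζ : ℝ)
    (hβ : 0 < β) (hτ : 0 < τ) (hθ : 0 < θ) (hΩ : 0 < Ω) (hζ : 0 < ζ) :
    let J : Matrix (Fin 3) (Fin 3) ℝ :=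
      !![-1, 0, 0;
         β, -τ, 0;
         ζ * θ * (1 + 2 * Ω) / ((1 + Ω) * (ζ + θ + ζ * Ω)), 0,
           -((ζ + θ + ζ * Ω) / (1 + Ω))]
    ((-1 : ℝ) < 0 ∧ -τ < 0 ∧ -((ζ + θ + ζ * Ω) / (1 + Ω)) < 0) ∧
    (∀ lam : ℝ,
      (J - lam • (1 : Matrix (Fin 3) (Fin 3) ℝ)).det = 0 ↔
        (lam = -1 ∨ lam = -τ ∨ lam = -((ζ + θ + ζ * Ω) / (1 + Ω)))) ∧
    (∀ lam : ℝ,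
      (J - lam • (1 : Matrix (Fin 3) (Fin 3) ℝ)).det = 0 → lam < 0) :=
  eigenvalues_negative_general β τ θ Ω ζ hτ hθ hΩ hζ
end

section
/- The matrix J − kc²Dc, where J is the Jacobian at W1 and Dc the diffusion matrix at the critical chemotactic sensitivity ξc, has a one-dimensional kernel spanned by the vector (ρ_R, 1, ρ_E), with ρ_R = (√τ/β)(√τ + √(δ/Φ₀)) and ρ_E = ζθ√τ(1+2Ω)/(β(θ+ζ(1+Ω))²) · (√τ + √(δ/Φ₀)). -/
/-!
The matrix `J - kc² • Dc` has the shape `!![a, b, 0; c, d, 0; e, 0, f]` with `c = β ≠ 0` and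
`f ≠ 0`, so its second and third rows express `w 0` and `w 2` through `w 1`: the kernel is at most
a line. It is a line because `ξc` is exactly the value making the upper left `2 × 2` block
singular. Writing `τ = s²` and `δ = q² Φ₀` turns every square root into a monomial
(`kc² = s / (q Φ₀)`, `√(δ τ Φ₀) = q s Φ₀`), after which all identities are rational.
-/

open Matrix

section Kernel

variable {R : Type*} [CommRing R] {a b c d e f r t : R}

theorem mulVec_blockTriangular (w : Fin 3 → R) :
    !![a, b, 0; c, d, 0; e, 0, f] *ᵥ w =
      ![a * w 0 + b * w 1, c * w 0 + d * w 1, e * w 0 + f * w 2] := by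
  ext i; fin_cases i <;> simp [mulVec, dotProduct, Fin.sum_univ_three]

theorem mulVec_blockTriangular_eq_zero (h₀ : a * r + b = 0) (h₁ : c * r + d = 0)
    (h₂ : e * r + f * t = 0) :
    !![a, b, 0; c, d, 0; e, 0, f] *ᵥ ![r, 1, t] = 0 := by
  rw [mulVec_blockTriangular]; simp [h₀, h₁, h₂]

theorem eq_smul_of_mulVec_blockTriangular_eq_zero [IsDomain R] (hc : c ≠ 0) (hf : f ≠ 0)
    (h₁ : c * r + d = 0) (h₂ : e * r + f * t = 0) {w : Fin 3 → R}
    (hw : !![a, b, 0; c, d, 0; e, 0, f] *ᵥ w = 0) : w = w 1 • ![r, 1, t] := by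
  rw [mulVec_blockTriangular] at hw
  have hw₁ : c * w 0 + d * w 1 = 0 := by simpa using congrFun hw 1
  have hw₂ : e * w 0 + f * w 2 = 0 := by simpa using congrFun hw 2
  have h0 : w 0 = w 1 * r :=
    sub_eq_zero.1 <| (mul_eq_zero.1 (by linear_combination hw₁ - w 1 * h₁)).resolve_left hc
  have h2 : w 2 = w 1 * t :=
    sub_eq_zero.1 <|
      (mul_eq_zero.1 (by linear_combination hw₂ - w 1 * h₂ - e * h0)).resolve_left hf
  ext i; fin_cases i <;> simp [h0, h2]

end Kernel

/-- The matrix `J − kc²Dc` has a one-dimensional kernel spanned by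
`(ρ_R, 1, ρ_E)` with `ρ_R = (√τ/β)(√τ + √(δ/Φ₀))` and
`ρ_E = ζθ√τ(1+2Ω)/(β(θ+ζ(1+Ω))²)·(√τ + √(δ/Φ₀))`. -/
theorem kernel_spanned (β τ θ Ω ζ δ Φ₀ Φ₁ : ℝ)
    (hβ : 0 < β) (hτ : 0 < τ) (hθ : 0 < θ) (hΩ : 0 < Ω) (hζ : 0 < ζ)
    (hδ : 0 < δ) (hΦ₀ : 0 < Φ₀) (hΦ₁ : 0 < Φ₁) :
    let ξc : ℝ := (δ + τ * Φ₀ + 2 * Real.sqrt (δ * τ * Φ₀)) / (β * Φ₁)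
    let kc2 : ℝ := Real.sqrt (τ / (δ * Φ₀))
    let J : Matrix (Fin 3) (Fin 3) ℝ :=
      !![-1, 0, 0;
         β, -τ, 0;
         ζ * θ * (1 + 2 * Ω) / ((1 + Ω) * (ζ + θ + ζ * Ω)), 0,
           -((ζ + θ + ζ * Ω) / (1 + Ω))]
    let Dc : Matrix (Fin 3) (Fin 3) ℝ :=
      !![Φ₀, -ξc * Φ₁, 0; 0, δ, 0; 0, 0, 0]
    let ρR : ℝ := Real.sqrt τ / β * (Real.sqrt τ + Real.sqrt (δ / Φ₀))
    let ρE : ℝ := ζ * θ * Real.sqrt τ * (1 + 2 * Ω) /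
        (β * (θ + ζ * (1 + Ω)) ^ 2) * (Real.sqrt τ + Real.sqrt (δ / Φ₀))
    let v : Fin 3 → ℝ := ![ρR, 1, ρE]
    (J - kc2 • Dc).mulVec v = 0 ∧
    (∀ w : Fin 3 → ℝ, (J - kc2 • Dc).mulVec w = 0 → ∃ c : ℝ, w = c • v) := by
  obtain ⟨s, hs, rfl⟩ : ∃ s, 0 < s ∧ τ = s ^ 2 := ⟨√τ, by positivity, (Real.sq_sqrt hτ.le).symm⟩
  obtain ⟨q, hq, rfl⟩ : ∃ q, 0 < q ∧ δ = q ^ 2 * Φ₀ :=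
    ⟨√(δ / Φ₀), by positivity, by rw [Real.sq_sqrt (by positivity), div_mul_cancel₀ _ hΦ₀.ne']⟩
  have sqrt_of_sq {y : ℝ} (x : ℝ) (hy : 0 < y) (h : y * y = x) : √x = y :=
    (Real.sqrt_eq_iff_mul_self_eq_of_pos hy).2 h
  rw [sqrt_of_sq (s ^ 2) hs (by ring), sqrt_of_sq (q ^ 2 * Φ₀ / Φ₀) hq (by field_simp),
    sqrt_of_sq (s ^ 2 / (q ^ 2 * Φ₀ * Φ₀)) (by positivity : 0 < s / (q * Φ₀)) (by field_simp),
    sqrt_of_sq (q ^ 2 * Φ₀ * s ^ 2 * Φ₀) (by positivity : 0 < q * s * Φ₀) (by ring)]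
  intro ξc kc2 J Dc ρR ρE v
  set A := ζ * θ * (1 + 2 * Ω) / ((1 + Ω) * (ζ + θ + ζ * Ω))
  set B := (ζ + θ + ζ * Ω) / (1 + Ω)
  have hB : 0 < B := by positivity
  have hJD : J - kc2 • Dc =
      !![-1 - kc2 * Φ₀, kc2 * (ξc * Φ₁), 0; β, -s ^ 2 - kc2 * (q ^ 2 * Φ₀), 0; A, 0, -B] := by
    ext i j; fin_cases i <;> fin_cases j <;> simp [J, Dc, A, B]
  have h₀ : (-1 - kc2 * Φ₀) * ρR + kc2 * (ξc * Φ₁) = 0 := by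
    simp only [ρR, kc2, ξc]; field_simp; ring
  have h₁ : β * ρR + (-s ^ 2 - kc2 * (q ^ 2 * Φ₀)) = 0 := by
    simp only [ρR, kc2]; field_simp; ring
  have h₂ : A * ρR + -B * ρE = 0 := by
    simp only [A, B, ρR, ρE]; field_simp; ring
  rw [hJD]
  exact ⟨mulVec_blockTriangular_eq_zero h₀ h₁ h₂, fun w hw =>
    ⟨w 1, eq_smul_of_mulVec_blockTriangular_eq_zero hβ.ne' (neg_ne_zero.2 hB.ne') h₁ h₂ hw⟩⟩
end

section
/- The determinant of J − kc²Dc is zero at ξ = ξc with kc² = √(τ/(δΦ₀)); explicitly, (1 + kc²Φ₀)(kc²δ + τ) − β kc² ξc Φ₁ = 0. -/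
/-!
For fixed `ξ`, the `2 × 2` determinant `(1 + kΦ₀)(kδ + τ) − βkξΦ₁` is, up to the positive factor
`k`, the difference `(1 + kΦ₀)(kδ + τ)/k − βξΦ₁`, and the first term is minimal at
`k² = τ/(δΦ₀)` by AM–GM, with minimum `δ + τΦ₀ + 2√(δτΦ₀) = βξcΦ₁`. So at `ξ = ξc` and this `k`
the determinant equals `(k√(δΦ₀) − √τ)² = 0`. The last column of `J − kDc` vanishes off the
diagonal, so the `3 × 3` determinant is the `(2, 2)` entry times the `2 × 2` one.
-/

theorem Matrix.det_fin_three_of_col_two_eq_zero {R : Type*} [CommRing R] (a b c d e f g : R) :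
    !![a, b, 0; c, d, 0; e, f, g].det = g * (a * d - b * c) := by
  rw [Matrix.det_fin_three]
  simp only [Matrix.of_apply, Matrix.cons_val', Matrix.cons_val_zero, Matrix.cons_val_one,
    Matrix.cons_val_two, Matrix.empty_val', Matrix.cons_val_fin_one, Matrix.head_cons,
    Matrix.tail_cons, Matrix.head_fin_const]
  ring

theorem sqrt_div_mul_sqrt_mul_eq {τ δ Φ₀ : ℝ} (hτ : 0 ≤ τ) (hδΦ₀ : 0 < δ * Φ₀) :
    Real.sqrt (τ / (δ * Φ₀)) * Real.sqrt (δ * τ * Φ₀) = τ := by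
  rw [← Real.sqrt_mul (div_nonneg hτ hδΦ₀.le),
    show τ / (δ * Φ₀) * (δ * τ * Φ₀) = τ ^ 2 by
      rw [div_mul_eq_mul_div, div_eq_iff hδΦ₀.ne']; ring]
  exact Real.sqrt_sq hτ

theorem critical_wavenumber_identity {τ δ Φ₀ : ℝ} (hτ : 0 ≤ τ) (hδΦ₀ : 0 < δ * Φ₀) :
    let k := Real.sqrt (τ / (δ * Φ₀))
    (1 + k * Φ₀) * (k * δ + τ) = k * (δ + τ * Φ₀ + 2 * Real.sqrt (δ * τ * Φ₀)) := by
  intro k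
  have hk_sq : k ^ 2 * (δ * Φ₀) = τ := by
    rw [Real.sq_sqrt (div_nonneg hτ hδΦ₀.le), div_mul_cancel₀ τ hδΦ₀.ne']
  linear_combination hk_sq - 2 * sqrt_div_mul_sqrt_mul_eq hτ hδΦ₀

theorem det_vanishes_at_criticality_general (β τ θ Ω ζ δ Φ₀ Φ₁ : ℝ)
    (hβ : 0 < β) (hτ : 0 < τ)
    (hδ : 0 < δ) (hΦ₀ : 0 < Φ₀) (hΦ₁ : 0 < Φ₁) :
    let ξc : ℝ := (δ + τ * Φ₀ + 2 * Real.sqrt (δ * τ * Φ₀)) / (β * Φ₁)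
    let kc2 : ℝ := Real.sqrt (τ / (δ * Φ₀))
    let J : Matrix (Fin 3) (Fin 3) ℝ :=
      !![-1, 0, 0;
         β, -τ, 0;
         ζ * θ * (1 + 2 * Ω) / ((1 + Ω) * (ζ + θ + ζ * Ω)), 0,
           -((ζ + θ + ζ * Ω) / (1 + Ω))]
    let Dc : Matrix (Fin 3) (Fin 3) ℝ :=
      !![Φ₀, -ξc * Φ₁, 0; 0, δ, 0; 0, 0, 0]
    (J - kc2 • Dc).det = 0 ∧
    (1 + kc2 * Φ₀) * (kc2 * δ + τ) - β * kc2 * ξc * Φ₁ = 0 := by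
  intro ξc kc2 J Dc
  have hξc : β * ξc * Φ₁ = δ + τ * Φ₀ + 2 * Real.sqrt (δ * τ * Φ₀) := by
    simp only [ξc]
    field_simp
  have hcrit : (1 + kc2 * Φ₀) * (kc2 * δ + τ) - β * kc2 * ξc * Φ₁ = 0 := by
    linear_combination critical_wavenumber_identity hτ.le (mul_pos hδ hΦ₀) - kc2 * hξc
  have hmat : J - kc2 • Dc = !![-1 - kc2 * Φ₀, kc2 * (ξc * Φ₁), 0; β, -τ - kc2 * δ, 0;
      ζ * θ * (1 + 2 * Ω) / ((1 + Ω) * (ζ + θ + ζ * Ω)), 0, -((ζ + θ + ζ * Ω) / (1 + Ω))] := by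
    ext i j
    fin_cases i <;> fin_cases j <;> simp [J, Dc]
  refine ⟨?_, hcrit⟩
  rw [hmat, Matrix.det_fin_three_of_col_two_eq_zero]
  linear_combination (-((ζ + θ + ζ * Ω) / (1 + Ω))) * hcrit

/-- The determinant of `J − kc²Dc` vanishes at `ξ = ξc`, `kc² = √(τ/(δΦ₀))`;
explicitly `(1 + kc²Φ₀)(kc²δ + τ) − βkc²ξcΦ₁ = 0`. -/
theorem det_vanishes_at_criticality (β τ θ Ω ζ δ Φ₀ Φ₁ : ℝ)
    (hβ : 0 < β) (hτ : 0 < τ) (hθ : 0 < θ) (hΩ : 0 < Ω) (hζ : 0 < ζ)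
    (hδ : 0 < δ) (hΦ₀ : 0 < Φ₀) (hΦ₁ : 0 < Φ₁) :
    let ξc : ℝ := (δ + τ * Φ₀ + 2 * Real.sqrt (δ * τ * Φ₀)) / (β * Φ₁)
    let kc2 : ℝ := Real.sqrt (τ / (δ * Φ₀))
    let J : Matrix (Fin 3) (Fin 3) ℝ :=
      !![-1, 0, 0;
         β, -τ, 0;
         ζ * θ * (1 + 2 * Ω) / ((1 + Ω) * (ζ + θ + ζ * Ω)), 0,
           -((ζ + θ + ζ * Ω) / (1 + Ω))]
    let Dc : Matrix (Fin 3) (Fin 3) ℝ :=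
      !![Φ₀, -ξc * Φ₁, 0; 0, δ, 0; 0, 0, 0]
    (J - kc2 • Dc).det = 0 ∧
    (1 + kc2 * Φ₀) * (kc2 * δ + τ) - β * kc2 * ξc * Φ₁ = 0 :=
  det_vanishes_at_criticality_general β τ θ Ω ζ δ Φ₀ Φ₁ hβ hτ hδ hΦ₀ hΦ₁
end

section
/- The kernel of the adjoint operator (J − kc²Dc)ᵀ is spanned by the vector (1, σ_C, 0), where σ_C = (1/β)(1 + √(τΦ₀/δ)). -/
/-!
The matrix `(J − kc²Dc)ᵀ` has third row `(0, 0, −(ζ + θ + ζΩ)/(1 + Ω))`, a nonzero `(2, 2)`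
entry `−(τ + kc²δ)`, and at criticality its upper-left `2 × 2` block is singular with null
vector `(1, σ_C)`. So a null vector has third coordinate `0` and second coordinate `σ_C` times
the first. With `s = √(τΦ₀/δ)` one has `kc²Φ₀ = s`, `√(δτΦ₀) = δs` and `δs² = τΦ₀`, which
turns the singularity of the block into polynomial identities in `s`.
-/

open Matrix

theorem mulVec_eq_zero_iff_exists_eq_smul {K : Type*} [Field K] {a b c p q r σ : K}
    (hq : q ≠ 0) (hr : r ≠ 0) (ha : a + b * σ = 0) (hp : p + q * σ = 0) (w : Fin 3 → K) :
    !![a, b, c; p, q, 0; 0, 0, r] *ᵥ w = 0 ↔ ∃ t : K, w = t • ![1, σ, 0] := by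
  constructor
  · intro hw
    have h1 : p * w 0 + q * w 1 = 0 := by
      simpa [mulVec, dotProduct, Fin.sum_univ_three] using congrFun hw 1
    have h2 : r * w 2 = 0 := by
      simpa [mulVec, dotProduct, Fin.sum_univ_three] using congrFun hw 2
    have hw2 : w 2 = 0 := (mul_eq_zero.mp h2).resolve_left hr
    have hw1 : w 1 = σ * w 0 := by
      have : q * (w 1 - σ * w 0) = 0 := by linear_combination h1 - w 0 * hp
      linear_combination (mul_eq_zero.mp this).resolve_left hq
    refine ⟨w 0, ?_⟩
    ext i
    fin_cases i <;> simp [hw1, hw2, mul_comm]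
  · rintro ⟨t, rfl⟩
    ext i
    fin_cases i <;> simp [mulVec, dotProduct, Fin.sum_univ_three]
    · linear_combination t * ha
    · linear_combination t * hp

theorem critical_block_singular {β τ δ Φ₀ Φ₁ : ℝ} (hβ : β ≠ 0) (hτ : 0 ≤ τ) (hδ : 0 < δ)
    (hΦ₀ : 0 < Φ₀) (hΦ₁ : Φ₁ ≠ 0) :
    let ξc := (δ + τ * Φ₀ + 2 * Real.sqrt (δ * τ * Φ₀)) / (β * Φ₁)
    let kc2 := Real.sqrt (τ / (δ * Φ₀))
    let σC := (1 / β) * (1 + Real.sqrt (τ * Φ₀ / δ))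
    (-(1 + kc2 * Φ₀) + β * σC = 0) ∧ kc2 * (ξc * Φ₁) + -(τ + kc2 * δ) * σC = 0 := by
  intro ξc kc2 σC
  set s := Real.sqrt (τ * Φ₀ / δ)
  have hs : δ * s ^ 2 = τ * Φ₀ := by
    rw [Real.sq_sqrt (by positivity)]; field_simp
  have hk : kc2 = s / Φ₀ := by
    rw [eq_div_iff hΦ₀.ne', ← Real.sqrt_sq hΦ₀.le, ← Real.sqrt_mul (by positivity)]
    congr 1; field_simp
  have hσ : σC = (1 + s) / β := by
    simp only [σC, s]; ring
  have hδs : Real.sqrt (δ * τ * Φ₀) = δ * s := by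
    rw [show δ * τ * Φ₀ = δ ^ 2 * (τ * Φ₀ / δ) by field_simp,
      Real.sqrt_mul (by positivity), Real.sqrt_sq hδ.le]
  have hξ : ξc * Φ₁ = (δ + τ * Φ₀ + 2 * (δ * s)) / β := by
    simp only [ξc, hδs]; field_simp
  rw [hσ, hξ, hk]
  constructor
  · field_simp; ring
  · field_simp; linear_combination hs

/-- The kernel of the adjoint `(J − kc²Dc)ᵀ` is spanned by `(1, σ_C, 0)` with
`σ_C = (1/β)(1 + √(τΦ₀/δ))`. -/
theorem adjoint_kernel_spanned (β τ θ Ω ζ δ Φ₀ Φ₁ : ℝ)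
    (hβ : 0 < β) (hτ : 0 < τ) (hθ : 0 < θ) (hΩ : 0 < Ω) (hζ : 0 < ζ)
    (hδ : 0 < δ) (hΦ₀ : 0 < Φ₀) (hΦ₁ : 0 < Φ₁) :
    let ξc : ℝ := (δ + τ * Φ₀ + 2 * Real.sqrt (δ * τ * Φ₀)) / (β * Φ₁)
    let kc2 : ℝ := Real.sqrt (τ / (δ * Φ₀))
    let J : Matrix (Fin 3) (Fin 3) ℝ :=
      !![-1, 0, 0;
         β, -τ, 0;
         ζ * θ * (1 + 2 * Ω) / ((1 + Ω) * (ζ + θ + ζ * Ω)), 0,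
           -((ζ + θ + ζ * Ω) / (1 + Ω))]
    let Dc : Matrix (Fin 3) (Fin 3) ℝ :=
      !![Φ₀, -ξc * Φ₁, 0; 0, δ, 0; 0, 0, 0]
    let σC : ℝ := (1 / β) * (1 + Real.sqrt (τ * Φ₀ / δ))
    let v : Fin 3 → ℝ := ![1, σC, 0]
    (Matrix.transpose (J - kc2 • Dc)).mulVec v = 0 ∧
    (∀ w : Fin 3 → ℝ, (Matrix.transpose (J - kc2 • Dc)).mulVec w = 0 → ∃ c : ℝ, w = c • v) := by
  intro ξc kc2 J Dc σC v
  obtain ⟨ha, hp⟩ : -(1 + kc2 * Φ₀) + β * σC = 0 ∧ kc2 * (ξc * Φ₁) + -(τ + kc2 * δ) * σC = 0 :=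
    critical_block_singular hβ.ne' hτ.le hδ hΦ₀ hΦ₁.ne'
  have hq : -(τ + kc2 * δ) ≠ 0 := by
    have : 0 ≤ kc2 := Real.sqrt_nonneg _
    nlinarith
  have hr : -((ζ + θ + ζ * Ω) / (1 + Ω)) ≠ 0 := by
    have : 0 < (ζ + θ + ζ * Ω) / (1 + Ω) := by positivity
    linarith
  have hA : (J - kc2 • Dc)ᵀ = !![-(1 + kc2 * Φ₀), β, ζ * θ * (1 + 2 * Ω) / ((1 + Ω) * (ζ + θ + ζ * Ω));
      kc2 * (ξc * Φ₁), -(τ + kc2 * δ), 0; 0, 0, -((ζ + θ + ζ * Ω) / (1 + Ω))] := by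
    ext i j; fin_cases i <;> fin_cases j <;> simp [J, Dc] <;> ring
  rw [hA]
  exact ⟨(mulVec_eq_zero_iff_exists_eq_smul hq hr ha hp v).2 ⟨1, (one_smul ℝ v).symm⟩,
    fun w => (mulVec_eq_zero_iff_exists_eq_smul hq hr ha hp w).1⟩
end

section
/- The Jacobian of the amplitude system at the stripe equilibrium S₁ = (√(−ξ_m/s₁), 0) is the diagonal matrix diag(−2ξ_m/s₀, (s₁−s₂)ξ_m/(s₀s₁)); its trace is −(s₁+s₂)ξ_m/(s₀s₁) and its determinant is 2(s₂−s₁)ξ_m²/(s₀²s₁). -/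
/-!
At `ρ̄ = √(-ξ_m/s₁)` one has `s₁ ρ̄² = -ξ_m`. Each component is even in the other amplitude, so the
off-diagonal partials vanish at `ρ₂ = 0`; the diagonal ones are `(ξ_m + 3 s₁ ρ̄²)/s₀ = -2ξ_m/s₀`
and `(ξ_m + s₂ ρ̄²)/s₀`.
-/

section Derivatives

variable {𝕜 : Type*} [NontriviallyNormedField 𝕜]

theorem deriv_linear_add_cube_div (a b c d x : 𝕜) :
    deriv (fun t => (a * t + b * t ^ 3 + c * t) / d) x = (a + 3 * b * x ^ 2 + c) / d := by
  have h : HasDerivAt (fun t => (a * t + b * t ^ 3 + c * t) / d)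
      ((a * 1 + b * (3 * x ^ 2) + c * 1) / d) x :=
    ((((hasDerivAt_id x).const_mul a).add ((hasDerivAt_pow 3 x).const_mul b)).add
      ((hasDerivAt_id x).const_mul c)).div_const d
  rw [h.deriv]
  ring

theorem deriv_const_add_sq_div_zero (k c r d : 𝕜) :
    deriv (fun y => (k + c * y ^ 2 * r) / d) 0 = 0 := by
  rw [((((hasDerivAt_pow 2 (0 : 𝕜)).const_mul c).mul_const r).const_add k |>.div_const d).deriv]
  simp

end Derivatives

theorem stripe_jacobian_general (s₀ ξm s₁ s₂ : ℝ)
    (hξm : 0 < ξm) (hs₁ : s₁ < 0) :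
    let ρbar : ℝ := Real.sqrt (-ξm / s₁)
    let Jm : Matrix (Fin 2) (Fin 2) ℝ :=
      !![-2 * ξm / s₀, 0; 0, (s₁ - s₂) * ξm / (s₀ * s₁)]
    -- the entries are the partial derivatives of the amplitude vector field
    (deriv (fun x : ℝ => (ξm * x + s₁ * x ^ 3 + s₂ * (0 : ℝ) ^ 2 * x) / s₀) ρbar
        = Jm 0 0 ∧
     deriv (fun y : ℝ => (ξm * ρbar + s₁ * ρbar ^ 3 + s₂ * y ^ 2 * ρbar) / s₀) 0
        = Jm 0 1 ∧
     deriv (fun x : ℝ => (ξm * (0 : ℝ) + s₁ * (0 : ℝ) ^ 3 + s₂ * x ^ 2 * 0) / s₀)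
        ρbar = Jm 1 0 ∧
     deriv (fun y : ℝ => (ξm * y + s₁ * y ^ 3 + s₂ * ρbar ^ 2 * y) / s₀) 0
        = Jm 1 1) ∧
    Jm.trace = -((s₁ + s₂) * ξm) / (s₀ * s₁) ∧
    Jm.det = 2 * (s₂ - s₁) * ξm ^ 2 / (s₀ ^ 2 * s₁) := by
  intro ρbar Jm
  have hρbar_sq : ρbar ^ 2 = -ξm / s₁ :=
    Real.sq_sqrt (div_nonneg_of_nonpos (by linarith) hs₁.le)
  have hs₁_ne : s₁ ≠ 0 := hs₁.ne
  refine ⟨⟨?_, deriv_const_add_sq_div_zero _ _ _ _, by simp [Jm], ?_⟩, ?_, ?_⟩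
  · rw [deriv_linear_add_cube_div, hρbar_sq]
    show _ = -2 * ξm / s₀
    field_simp
    ring
  · rw [deriv_linear_add_cube_div, hρbar_sq]
    show _ = (s₁ - s₂) * ξm / (s₀ * s₁)
    field_simp
    ring
  · rw [Matrix.trace_fin_two_of]
    field_simp
    ring
  · rw [Matrix.det_fin_two_of]
    field_simp
    ring

/-- The Jacobian of the amplitude system at the stripe equilibrium
`S₁ = (√(−ξ_m/s₁), 0)` is `diag(−2ξ_m/s₀, (s₁−s₂)ξ_m/(s₀s₁))`, with trace
`−(s₁+s₂)ξ_m/(s₀s₁)` and determinant `2(s₂−s₁)ξ_m²/(s₀²s₁)`. -/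
theorem stripe_jacobian (s₀ ξm s₁ s₂ : ℝ)
    (hs₀ : s₀ ≠ 0) (hξm : 0 < ξm) (hs₁ : s₁ < 0) :
    let ρbar : ℝ := Real.sqrt (-ξm / s₁)
    let Jm : Matrix (Fin 2) (Fin 2) ℝ :=
      !![-2 * ξm / s₀, 0; 0, (s₁ - s₂) * ξm / (s₀ * s₁)]
    -- the entries are the partial derivatives of the amplitude vector field
    (deriv (fun x : ℝ => (ξm * x + s₁ * x ^ 3 + s₂ * (0 : ℝ) ^ 2 * x) / s₀) ρbar
        = Jm 0 0 ∧
     deriv (fun y : ℝ => (ξm * ρbar + s₁ * ρbar ^ 3 + s₂ * y ^ 2 * ρbar) / s₀) 0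
        = Jm 0 1 ∧
     deriv (fun x : ℝ => (ξm * (0 : ℝ) + s₁ * (0 : ℝ) ^ 3 + s₂ * x ^ 2 * 0) / s₀)
        ρbar = Jm 1 0 ∧
     deriv (fun y : ℝ => (ξm * y + s₁ * y ^ 3 + s₂ * ρbar ^ 2 * y) / s₀) 0
        = Jm 1 1) ∧
    Jm.trace = -((s₁ + s₂) * ξm) / (s₀ * s₁) ∧
    Jm.det = 2 * (s₂ - s₁) * ξm ^ 2 / (s₀ ^ 2 * s₁) :=
  stripe_jacobian_general s₀ ξm s₁ s₂ hξm hs₁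
end

section
/- For the amplitude system with ξ_m > 0, the stripe equilibrium S₁ = (√(−ξ_m/s₁), 0) satisfies Tr < 0 and Det > 0 of its Jacobian (hence is linearly asymptotically stable) if and only if s₀ > 0 and s₂ < s₁ < 0. -/
/-!
Since `s₁ < 0`, the denominator `s₀² s₁` of `Det` is negative whenever `s₀ ≠ 0`, so `Det > 0`
says exactly `s₂ < s₁` (and `s₀ ≠ 0`). Given that, `s₁ + s₂ < 0`, so the numerator of `Tr` is
positive and `Tr < 0` says exactly that `s₀ s₁ < 0`, i.e. `s₀ > 0`.
-/

section SignOfQuotient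

variable {K : Type*} [Field K] [LinearOrder K] [IsStrictOrderedRing K] {a b c : K}

lemma div_mul_neg_iff_of_pos_of_neg (ha : 0 < a) (hc : c < 0) : a / (b * c) < 0 ↔ 0 < b := by
  rw [div_neg_iff, mul_neg_iff, mul_pos_iff]
  constructor
  · rintro (⟨-, ⟨hb, -⟩ | ⟨-, hc'⟩⟩ | ⟨ha', -⟩)
    exacts [hb, absurd hc' hc.not_gt, absurd ha' ha.not_gt]
  · exact fun hb => Or.inl ⟨ha, Or.inl ⟨hb, hc⟩⟩

lemma div_sq_mul_pos_iff_of_neg (hc : c < 0) : 0 < a / (b ^ 2 * c) ↔ a < 0 ∧ b ≠ 0 := by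
  rcases eq_or_ne b 0 with rfl | hb
  · simp
  · have hden : b ^ 2 * c < 0 := mul_neg_of_pos_of_neg (by positivity) hc
    rw [div_pos_iff]
    constructor
    · rintro (⟨-, hden'⟩ | ⟨ha, -⟩)
      exacts [absurd hden' hden.not_gt, ⟨ha, hb⟩]
    · exact fun ⟨ha, _⟩ => Or.inr ⟨ha, hden⟩

end SignOfQuotient

lemma stripe_det_pos_iff {s₀ ξm s₁ s₂ : ℝ} (hs₁ : s₁ < 0) (hξm : ξm ≠ 0) :
    0 < 2 * (s₂ - s₁) * ξm ^ 2 / (s₀ ^ 2 * s₁) ↔ s₂ < s₁ ∧ s₀ ≠ 0 := by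
  have hξm2 : 0 < ξm ^ 2 := by positivity
  rw [div_sq_mul_pos_iff_of_neg hs₁]
  exact and_congr_left' ⟨fun h => by nlinarith, fun h => by nlinarith⟩

lemma stripe_trace_neg_iff {s₀ ξm s₁ s₂ : ℝ} (hs₁ : s₁ < 0) (h₂₁ : s₂ < s₁) (hξm : 0 < ξm) :
    -((s₁ + s₂) * ξm) / (s₀ * s₁) < 0 ↔ 0 < s₀ :=
  div_mul_neg_iff_of_pos_of_neg (by nlinarith) hs₁

theorem stripe_stability_iff_general (s₀ ξm s₁ s₂ : ℝ)
    (hs₁ : s₁ < 0) (hξm : 0 < ξm) :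
    let Tr : ℝ := -((s₁ + s₂) * ξm) / (s₀ * s₁)
    let Det : ℝ := 2 * (s₂ - s₁) * ξm ^ 2 / (s₀ ^ 2 * s₁)
    ((Tr < 0 ∧ 0 < Det) ↔ (0 < s₀ ∧ s₂ < s₁ ∧ s₁ < 0)) := by
  intro Tr Det
  have hDet : 0 < Det ↔ s₂ < s₁ ∧ s₀ ≠ 0 := stripe_det_pos_iff hs₁ hξm.ne'
  constructor
  · rintro ⟨hTr, hDet_pos⟩
    obtain ⟨h₂₁, -⟩ := hDet.mp hDet_pos
    exact ⟨(stripe_trace_neg_iff hs₁ h₂₁ hξm).mp hTr, h₂₁, hs₁⟩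
  · rintro ⟨h₀, h₂₁, -⟩
    exact ⟨(stripe_trace_neg_iff hs₁ h₂₁ hξm).mpr h₀, hDet.mpr ⟨h₂₁, h₀.ne'⟩⟩

/-- The stripe equilibrium `S₁` (which exists for `s₁ < 0`) satisfies
`Tr < 0` and `Det > 0` of its Jacobian—hence is linearly asymptotically
stable—iff `s₀ > 0` and `s₂ < s₁ < 0`. -/
theorem stripe_stability_iff (s₀ ξm s₁ s₂ : ℝ)
    (hs₀ : s₀ ≠ 0) (hs₁ : s₁ < 0) (hξm : 0 < ξm) :
    let Tr : ℝ := -((s₁ + s₂) * ξm) / (s₀ * s₁)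
    let Det : ℝ := 2 * (s₂ - s₁) * ξm ^ 2 / (s₀ ^ 2 * s₁)
    ((Tr < 0 ∧ 0 < Det) ↔ (0 < s₀ ∧ s₂ < s₁ ∧ s₁ < 0)) :=
  stripe_stability_iff_general s₀ ξm s₁ s₂ hs₁ hξm
end

section
/- For the amplitude system with ξ_m > 0 and s₁ + s₂ < 0, the square equilibrium Q is linearly asymptotically stable (trace of Jacobian negative and determinant positive) if and only if s₀ > 0 and s₁ < −|s₂|. -/
/-!
The Jacobian at `Q` is `κ • [[s₁, s₂], [s₂, s₁]]` with `κ = -2ξ_m / (s₀ (s₁ + s₂))`, whose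
eigenvalues are `κ (s₁ + s₂) = -2ξ_m / s₀` and `κ (s₁ - s₂)`. A negative trace and a positive
determinant say exactly that both (real) eigenvalues are negative: the first is negative iff
`s₀ > 0`, and then `κ > 0`, so the second is negative iff `s₁ < s₂`, which under
`s₁ + s₂ < 0` is `s₁ < -|s₂|`.
-/

theorem add_neg_and_pos_mul_iff {α : Type*} [Ring α] [LinearOrder α] [IsStrictOrderedRing α]
    {a b : α} : (a + b < 0 ∧ 0 < a * b) ↔ (a < 0 ∧ b < 0) := by
  constructor
  · rintro ⟨hsum, hprod⟩
    rcases mul_pos_iff.mp hprod with ⟨ha, hb⟩ | hneg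
    · exact absurd hsum (add_pos ha hb).not_gt
    · exact hneg
  · rintro ⟨ha, hb⟩
    exact ⟨add_neg ha hb, mul_pos_of_neg_of_neg ha hb⟩

theorem lt_neg_abs_iff_of_add_neg {α : Type*} [AddCommGroup α] [LinearOrder α]
    [IsOrderedAddMonoid α] {a b : α} (h : a + b < 0) : a < -|b| ↔ a < b := by
  rw [lt_neg, abs_lt, neg_neg]
  exact ⟨fun hb => hb.1, fun hab => ⟨hab, lt_neg_iff_add_neg'.mpr h⟩⟩

theorem square_stability_iff_general (s₀ ξm s₁ s₂ : ℝ)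
    (hξm : 0 < ξm) (hsum : s₁ + s₂ < 0) :
    let Tr : ℝ := -(4 * s₁ * ξm) / (s₀ * (s₁ + s₂))
    let Det : ℝ := 4 * (s₁ - s₂) * ξm ^ 2 / (s₀ ^ 2 * (s₁ + s₂))
    ((Tr < 0 ∧ 0 < Det) ↔ (0 < s₀ ∧ s₁ < -|s₂|)) := by
  intro Tr Det
  set κ := -(2 * ξm) / (s₀ * (s₁ + s₂)) with hκ
  have hκ_add : κ * (s₁ + s₂) = -(2 * ξm) / s₀ := by
    rw [hκ, div_mul_eq_mul_div, mul_div_mul_right _ _ hsum.ne]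
  have hTr : Tr = κ * (s₁ + s₂) + κ * (s₁ - s₂) := by simp only [Tr, hκ]; ring
  have hDet : Det = κ * (s₁ + s₂) * (κ * (s₁ - s₂)) := by
    rw [hκ_add]; simp only [Det, hκ]; field_simp; ring
  rw [hTr, hDet, add_neg_and_pos_mul_iff, hκ_add, neg_div, neg_lt_zero,
    div_pos_iff_of_pos_left (by positivity), lt_neg_abs_iff_of_add_neg hsum]
  refine and_congr_right fun hs₀ => ?_
  have hκ_pos : 0 < κ := div_pos_of_neg_of_neg (by linarith) (mul_neg_of_pos_of_neg hs₀ hsum)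
  rw [mul_neg_iff, sub_neg]
  simp only [hκ_pos, hκ_pos.not_gt, true_and, false_and, or_false]

/-- With `ξ_m > 0` and `s₁ + s₂ < 0`, the square equilibrium `Q` is linearly
asymptotically stable (trace of its Jacobian negative and determinant
positive) iff `s₀ > 0` and `s₁ < −|s₂|`. -/
theorem square_stability_iff (s₀ ξm s₁ s₂ : ℝ)
    (hs₀ : s₀ ≠ 0) (hξm : 0 < ξm) (hsum : s₁ + s₂ < 0) :
    let Tr : ℝ := -(4 * s₁ * ξm) / (s₀ * (s₁ + s₂))
    let Det : ℝ := 4 * (s₁ - s₂) * ξm ^ 2 / (s₀ ^ 2 * (s₁ + s₂))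
    ((Tr < 0 ∧ 0 < Det) ↔ (0 < s₀ ∧ s₁ < -|s₂|)) :=
  square_stability_iff_general s₀ ξm s₁ s₂ hξm hsum
end
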